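/- Let (g, [·,·], {·,·,·}) be a Lie-Yamaguti algebra, V a real vector space, ρ: g → End(V) a linear map and D, θ: g×g → End(V) bilinear maps. Define on g ⊕ V the operations [x+u, y+v]⋉ := [x,y] + ρ(x)v - ρ(y)u and {x+u, y+v, z+w}⋉ := {x,y,z} + D(x,y)w - θ(x,z)v + θ(y,z)u, for x,y,z in g and u,v,w in V. If (g ⊕ V, [·,·]⋉, {·,·,·}⋉) is a Lie-Yamaguti algebra (i.e. satisfies (LY1)–(LY6)), then (V; ρ, D, θ) is a representation of g, i.e. ρ, D, θ satisfy (RLY1)–(RLY6). -/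
import Mathlib


/-- A (real) Lie-Yamaguti algebra structure on `g`: a bilinear bracket `br`, a
trilinear bracket `tr`, and the axioms (LY1)-(LY6). -/
structure LieYamaguti (g : Type*) [AddCommGroup g] [Module ℝ g] where
  br : g →ₗ[ℝ] g →ₗ[ℝ] g
  tr : g →ₗ[ℝ] g →ₗ[ℝ] g →ₗ[ℝ] g
  ly1 : ∀ x y, br x y = - br y x
  ly2 : ∀ x y z, tr x y z = - tr y x z
  ly3 : ∀ x y z, (br (br x y) z + tr x y z) + (br (br y z) x + tr y z x) +
      (br (br z x) y + tr z x y) = 0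
  ly4 : ∀ x y z u, tr (br x y) z u + tr (br y z) x u + tr (br z x) y u = 0
  ly5 : ∀ x y u v, tr x y (br u v) = br (tr x y u) v + br u (tr x y v)
  ly6 : ∀ x y u v w, tr x y (tr u v w) =
      tr (tr x y u) v w + tr u (tr x y v) w + tr u v (tr x y w)

/-- The Lie-Yamaguti algebra axioms (LY1)-(LY6) for a binary operation `br`
and a ternary operation `tr`. -/
def IsLieYamaguti {h : Type*} [AddCommGroup h] (br : h → h → h) (tr : h → h → h → h) : Prop :=
  (∀ x y, br x y = - br y x) ∧
  (∀ x y z, tr x y z = - tr y x z) ∧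
  (∀ x y z, (br (br x y) z + tr x y z) + (br (br y z) x + tr y z x) +
      (br (br z x) y + tr z x y) = 0) ∧
  (∀ x y z u, tr (br x y) z u + tr (br y z) x u + tr (br z x) y u = 0) ∧
  (∀ x y u v, tr x y (br u v) = br (tr x y u) v + br u (tr x y v)) ∧
  (∀ x y u v w, tr x y (tr u v w) =
      tr (tr x y u) v w + tr u (tr x y v) w + tr u v (tr x y w))

/-- If the operations `[x+u, y+v] := [x,y] + ρ(x)v - ρ(y)u` and
`{x+u, y+v, z+w} := {x,y,z} + D(x,y)w - θ(x,z)v + θ(y,z)u` make `g ⊕ V` a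
Lie-Yamaguti algebra, then `(V; ρ, D, θ)` is a representation of `g`,
i.e. (RLY1)-(RLY6) hold. -/
theorem semidirect_gives_representation {g V : Type*} [AddCommGroup g] [Module ℝ g]
    [AddCommGroup V] [Module ℝ V] (L : LieYamaguti g)
    (ρ : g →ₗ[ℝ] Module.End ℝ V) (D θ : g →ₗ[ℝ] g →ₗ[ℝ] Module.End ℝ V)
    (H : IsLieYamaguti
      (fun p q : g × V => (L.br p.1 q.1, ρ p.1 q.2 - ρ q.1 p.2))
      (fun p q r : g × V =>
        (L.tr p.1 q.1 r.1, D p.1 q.1 r.2 - θ p.1 r.1 q.2 + θ q.1 r.1 p.2))) :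
    (∀ a b, D a b + θ a b - θ b a = ρ a * ρ b - ρ b * ρ a - ρ (L.br a b)) ∧
    (∀ a b c, θ a (L.br b c) - ρ b * θ a c + ρ c * θ a b = 0) ∧
    (∀ a b c, θ (L.br a b) c - θ a c * ρ b + θ b c * ρ a = 0) ∧
    (∀ a b c d, θ c d * θ a b - θ b d * θ a c - θ a (L.tr b c d) + D b c * θ a d = 0) ∧
    (∀ a b c, D a b * ρ c - ρ c * D a b = ρ (L.tr a b c)) ∧
    (∀ a b c d, D a b * θ c d - θ c d * D a b = θ (L.tr a b c) d + θ c (L.tr a b d)) := by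

  obtain ⟨h1, h2, h3, h4, h5, h6⟩ := H
  refine ⟨?_, ?_, ?_, ?_, ?_, ?_⟩
  · intro a b
    ext v
    have h := congrArg Prod.snd (h3 (a, 0) (b, 0) (0, v))
    simp only [Prod.snd_add, map_zero, map_sub, map_neg, LinearMap.zero_apply,
      sub_zero, zero_sub, add_zero, zero_add, neg_zero, Prod.snd_zero] at h
    simp only [LinearMap.sub_apply, LinearMap.add_apply, Module.End.mul_apply]
    linear_combination (norm := abel1) h
  · intro a b c
    ext w
    have h := congrArg Prod.snd (h5 (a, 0) ((0 : g), w) (b, 0) (c, 0))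
    simp only [Prod.snd_add, map_zero, map_sub, map_neg, LinearMap.zero_apply,
      sub_zero, zero_sub, add_zero, zero_add, neg_zero, Prod.snd_zero] at h
    simp only [LinearMap.sub_apply, LinearMap.add_apply, Module.End.mul_apply,
      LinearMap.zero_apply]
    linear_combination (norm := abel1) -h
  · intro a b c
    ext w
    have h := congrArg Prod.snd (h4 (a, 0) (b, 0) ((0 : g), w) (c, 0))
    simp only [Prod.snd_add, map_zero, map_sub, map_neg, LinearMap.zero_apply,
      sub_zero, zero_sub, add_zero, zero_add, neg_zero, Prod.snd_zero] at h
    simp only [LinearMap.sub_apply, LinearMap.add_apply, Module.End.mul_apply,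
      LinearMap.zero_apply]
    linear_combination (norm := abel1) -h
  · intro a b c d
    ext m
    have h := congrArg Prod.snd (h6 (a, 0) ((0 : g), m) (b, 0) (c, 0) (d, 0))
    simp only [Prod.snd_add, map_zero, map_sub, map_neg, LinearMap.zero_apply,
      sub_zero, zero_sub, add_zero, zero_add, neg_zero, Prod.snd_zero] at h
    simp only [LinearMap.sub_apply, LinearMap.add_apply, Module.End.mul_apply,
      LinearMap.zero_apply]
    linear_combination (norm := abel1) h
  · intro a b c
    ext m
    have h := congrArg Prod.snd (h5 (a, 0) (b, 0) (c, 0) ((0 : g), m))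
    simp only [Prod.snd_add, map_zero, map_sub, map_neg, LinearMap.zero_apply,
      sub_zero, zero_sub, add_zero, zero_add, neg_zero, Prod.snd_zero] at h
    simp only [LinearMap.sub_apply, LinearMap.add_apply, Module.End.mul_apply]
    linear_combination (norm := abel1) h
  · intro a b c d
    ext m
    have h := congrArg Prod.snd (h6 (a, 0) (b, 0) (c, 0) ((0 : g), m) (d, 0))
    simp only [Prod.snd_add, map_zero, map_sub, map_neg, LinearMap.zero_apply,
      sub_zero, zero_sub, add_zero, zero_add, neg_zero, Prod.snd_zero] at h
    simp only [LinearMap.sub_apply, LinearMap.add_apply, Module.End.mul_apply]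
    linear_combination (norm := abel1) -h
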